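/- arXiv:1503.01865 — 5 statements merged into one kernel-verified Lean document; each statement's English description precedes it below -/
import Mathlib

section
/- On the unit sphere in three-dimensional Euclidean space, the sum of the interior angles of any nondegenerate spherical triangle (with vertices pairwise non-antipodal, joined by minimizing great-circle arcs) is strictly greater than π. -/
open Real RealInnerProductSpace

/-- The interior angle of a spherical triangle at the vertex `A`, towards vertices `X` and `Y`:
the angle between the tangent vectors at `A` of the great-circle arcs `AX` and `AY`. -/
noncomputable def sAngle (A X Y : EuclideanSpace ℝ (Fin 3)) : ℝ :=
  InnerProductGeometry.angle (X - ⟪A, X⟫ • A) (Y - ⟪A, Y⟫ • A)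

/-!
By Lagrange's identity, the tangent vectors at a unit vertex `A` have the same Gram matrix as
their images under `A × ·`, so the angle at `A` is the angle between the normals `A × B` and
`A × C` of the two sides, that is `π` minus the angle between the polar vertices `C × A` and
`A × B`. The polar vertices `B × C`, `C × A`, `A × B` are linearly independent, and for linearly
independent `x, y, z` the triangle inequality for angles, applied through `-z`, is strict and
gives `∠(x, y) + ∠(y, z) + ∠(z, x) < 2π`. Hence the angle sum exceeds `3π - 2π = π`.
-/

theorem LinearIndependent.triple_iff {R M : Type*} [Ring R] [AddCommGroup M] [Module R M]
    {x y z : M} : LinearIndependent R ![x, y, z] ↔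
      ∀ a b c : R, a • x + b • y + c • z = 0 → a = 0 ∧ b = 0 ∧ c = 0 := by
  rw [Fintype.linearIndependent_iff]
  refine ⟨fun h a b c habc => ?_, fun h g hg i => ?_⟩
  · have hg := h ![a, b, c] (by simpa [Fin.sum_univ_three] using habc)
    exact ⟨hg 0, hg 1, hg 2⟩
  · obtain ⟨h0, h1, h2⟩ := h (g 0) (g 1) (g 2) (by simpa [Fin.sum_univ_three] using hg)
    fin_cases i <;> assumption

namespace InnerProductGeometry

variable {V : Type*} [NormedAddCommGroup V] [InnerProductSpace ℝ V]

theorem angle_eq_angle_of_inner_eq {x y u v : V} (hx : ⟪x, x⟫ = ⟪u, u⟫) (hy : ⟪y, y⟫ = ⟪v, v⟫)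
    (hxy : ⟪x, y⟫ = ⟪u, v⟫) : angle x y = angle u v := by
  simp only [angle, norm_eq_sqrt_real_inner, hx, hy, hxy]

theorem angle_lt_angle_add_angle_of_linearIndependent {x y z : V}
    (h : LinearIndependent ℝ ![x, y, z]) : angle x z < angle x y + angle y z := by
  refine (angle_le_angle_add_angle x y z).lt_of_ne fun heq => ?_
  have hy : y ≠ 0 := by simpa using h.ne_zero 1
  rw [LinearIndependent.triple_iff] at h
  rcases (angle_eq_angle_add_angle_iff hy).1 heq with hπ | hmem
  · obtain ⟨-, r, -, rfl⟩ := angle_eq_pi_iff.1 hπ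
    simpa using (h r 0 (-1) (by simp)).2.2
  · obtain ⟨a, b, rfl⟩ := Submodule.mem_span_pair.1 hmem
    simpa using (h a (-1) b (by simp [NNReal.smul_def])).2.1

theorem angle_add_angle_add_angle_lt_two_pi_of_linearIndependent {x y z : V}
    (h : LinearIndependent ℝ ![x, y, z]) : angle x y + angle y z + angle z x < 2 * π := by
  have h' : LinearIndependent ℝ ![x, -z, y] := by
    rw [LinearIndependent.triple_iff] at h ⊢
    intro a b c habc
    obtain ⟨ha, hc, hb⟩ := h a c (-b) (by rw [← habc]; module)
    exact ⟨ha, neg_eq_zero.1 hb, hc⟩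
  have := angle_lt_angle_add_angle_of_linearIndependent h'
  rw [angle_neg_right, angle_neg_left, angle_comm x z, angle_comm z y] at this
  linarith

end InnerProductGeometry

open InnerProductGeometry WithLp Matrix

namespace EuclideanSpace

noncomputable def cross (u v : EuclideanSpace ℝ (Fin 3)) : EuclideanSpace ℝ (Fin 3) :=
  toLp 2 (ofLp u ⨯₃ ofLp v)

variable (u v w x : EuclideanSpace ℝ (Fin 3))

theorem neg_cross : -cross u v = cross v u := by
  rw [cross, cross, ← toLp_neg, _root_.neg_cross]

theorem inner_cross_cross : ⟪cross u v, cross w x⟫ = ⟪u, w⟫ * ⟪v, x⟫ - ⟪u, x⟫ * ⟪v, w⟫ := by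
  simp only [cross, inner_eq_star_dotProduct, star_trivial, cross_dot_cross, dotProduct_comm]

theorem inner_cross : ⟪u, cross v w⟫ = ofLp u ⬝ᵥ ofLp v ⨯₃ ofLp w := by
  rw [inner_eq_star_dotProduct, star_trivial, dotProduct_comm, cross, ofLp_toLp]

theorem inner_self_cross : ⟪u, cross u v⟫ = 0 := by
  rw [inner_cross, dot_self_cross]

theorem inner_cross_self : ⟪v, cross u v⟫ = 0 := by
  rw [inner_cross, dot_cross_self]

theorem inner_cross_comm : ⟪u, cross v w⟫ = ⟪v, cross w u⟫ := by
  rw [inner_cross, inner_cross, triple_product_permutation]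

variable {u v w}

theorem inner_cross_ne_zero_of_linearIndependent (h : LinearIndependent ℝ ![u, v, w]) :
    ⟪u, cross v w⟫ ≠ 0 := by
  rw [inner_cross, triple_product_eq_det]
  have hrows : LinearIndependent ℝ ![ofLp u, ofLp v, ofLp w] := by
    convert h.map' (WithLp.linearEquiv 2 ℝ (Fin 3 → ℝ)).toLinearMap (LinearEquiv.ker _) using 1
      <;> try rfl
    ext i : 1
    fin_cases i <;> rfl
  exact ((isUnit_iff_isUnit_det _).1 (linearIndependent_rows_iff_isUnit.1 hrows)).ne_zero

theorem linearIndependent_cross_of_linearIndependent (h : LinearIndependent ℝ ![u, v, w]) :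
    LinearIndependent ℝ ![cross v w, cross w u, cross u v] := by
  have hd := inner_cross_ne_zero_of_linearIndependent h
  rw [LinearIndependent.triple_iff]
  intro a b c habc
  have hu := congrArg (⟪u, ·⟫) habc
  have hv := congrArg (⟪v, ·⟫) habc
  have hw := congrArg (⟪w, ·⟫) habc
  simp only [inner_add_right, real_inner_smul_right, inner_self_cross, inner_cross_self,
    inner_zero_right, mul_zero, add_zero, zero_add, mul_eq_zero] at hu hv hw
  rw [inner_cross_comm v] at hv
  rw [inner_cross_comm w] at hv hw
  exact ⟨hu.resolve_right hd, hv.resolve_right hd, hw.resolve_right hd⟩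

theorem inner_sub_inner_smul_eq_inner_cross (hu : ‖u‖ = 1) :
    ⟪v - ⟪u, v⟫ • u, w - ⟪u, w⟫ • u⟫ = ⟪cross u v, cross u w⟫ := by
  have huu : ⟪u, u⟫ = 1 := by rw [real_inner_self_eq_norm_sq, hu, one_pow]
  rw [inner_cross_cross, huu, inner_sub_left, inner_sub_right, inner_sub_right,
    real_inner_smul_left, real_inner_smul_left, real_inner_smul_right, real_inner_smul_right, huu,
    real_inner_comm v u]
  ring

end EuclideanSpace

open EuclideanSpace

theorem sAngle_eq_angle_cross {A : EuclideanSpace ℝ (Fin 3)} (hA : ‖A‖ = 1)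
    (X Y : EuclideanSpace ℝ (Fin 3)) : sAngle A X Y = angle (cross A X) (cross A Y) :=
  angle_eq_angle_of_inner_eq (inner_sub_inner_smul_eq_inner_cross hA)
    (inner_sub_inner_smul_eq_inner_cross hA) (inner_sub_inner_smul_eq_inner_cross hA)

theorem spherical_angle_sum_gt_pi_general (A B C : EuclideanSpace ℝ (Fin 3))
    (hA : ‖A‖ = 1) (hB : ‖B‖ = 1) (hC : ‖C‖ = 1)
    (hind : LinearIndependent ℝ ![A, B, C]) :
    sAngle A B C + sAngle B A C + sAngle C A B > π := by
  have hpolar := angle_add_angle_add_angle_lt_two_pi_of_linearIndependent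
    (linearIndependent_cross_of_linearIndependent hind)
  rw [sAngle_eq_angle_cross hA, sAngle_eq_angle_cross hB, sAngle_eq_angle_cross hC,
    ← EuclideanSpace.neg_cross C A, ← EuclideanSpace.neg_cross A B,
    ← EuclideanSpace.neg_cross B C, angle_neg_right, angle_neg_left, angle_neg_right]
  linarith [angle_comm (cross B C) (cross C A), angle_comm (cross A B) (cross C A)]

/-- On the unit sphere, the sum of the interior angles of any nondegenerate spherical triangle
(vertices pairwise non-antipodal and not on a common great circle) is strictly greater than π. -/
theorem spherical_angle_sum_gt_pi (A B C : EuclideanSpace ℝ (Fin 3))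
    (hA : ‖A‖ = 1) (hB : ‖B‖ = 1) (hC : ‖C‖ = 1)
    (hAB : A ≠ B) (hBC : B ≠ C) (hAC : A ≠ C)
    (hAB' : A ≠ -B) (hBC' : B ≠ -C) (hAC' : A ≠ -C)
    (hind : LinearIndependent ℝ ![A, B, C]) :
    sAngle A B C + sAngle B A C + sAngle C A B > π :=
  spherical_angle_sum_gt_pi_general A B C hA hB hC hind
end

section
/- Angle of parallelism: in the hyperbolic plane, for a point G at distance p > 0 from a line ℓ (with F the foot of the perpendicular from G to ℓ), the supremum of the angles ∠FGA over all points A on ℓ distinct from F is the angle Π(p) satisfying cos Π(p) = tanh p (equivalently tan(Π(p)/2) = e^{−p}); in particular Π(p) < π/2, and Π(p) → π/2 as p → 0 while Π(p) → 0 as p → ∞. -/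
open Real Filter Topology

/-!
By Pythagoras `cosh c = cosh p cosh q` for the hypotenuse `c`, and the law of cosines then
simplifies to `cos α = tanh p / tanh c`. As `0 < tanh c < 1`, every angle is at most
`arccos (tanh p)`; as `q → ∞` also `c → ∞`, so `tanh c → 1` and the angles tend to
`arccos (tanh p)`, which is therefore their supremum.
-/

/-- The inverse hyperbolic cosine on `[1, ∞)`. -/
noncomputable def arcosh (x : ℝ) : ℝ := Real.log (x + Real.sqrt (x ^ 2 - 1))

/-- The hypotenuse of a hyperbolic right triangle with legs `p` and `q`
(hyperbolic Pythagorean theorem). -/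
noncomputable def hypotenuse (p q : ℝ) : ℝ := _root_.arcosh (Real.cosh p * Real.cosh q)

/-- The angle at the vertex of the leg of length `p` in a hyperbolic right triangle with legs
`p, q`, computed from the hyperbolic law of cosines (the side opposite this angle is the leg of
length `q`). -/
noncomputable def rightTriangleAngle (p q : ℝ) : ℝ :=
  Real.arccos ((Real.cosh p * Real.cosh (hypotenuse p q) - Real.cosh q) /
    (Real.sinh p * Real.sinh (hypotenuse p q)))

namespace Real

theorem tanh_pos {x : ℝ} (hx : 0 < x) : 0 < tanh x := by
  rw [tanh_eq_sinh_div_cosh]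
  exact div_pos (sinh_pos_iff.2 hx) (cosh_pos x)

theorem continuous_tanh : Continuous tanh := by
  simp only [funext tanh_eq_sinh_div_cosh]
  exact continuous_sinh.div continuous_cosh fun x => (cosh_pos x).ne'

theorem tanh_eq_one_sub (x : ℝ) : tanh x = 1 - 2 / (exp (2 * x) + 1) := by
  rw [tanh_eq, two_mul, exp_add, exp_neg]
  field_simp
  ring

theorem tendsto_tanh_atTop : Tendsto tanh atTop (𝓝 1) := by
  have h : Tendsto (fun x => exp (2 * x) + 1) atTop atTop :=
    tendsto_atTop_add_const_right _ _
      (tendsto_exp_atTop.comp (tendsto_id.const_mul_atTop two_pos))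
  have := (tendsto_const_nhds (x := (1 : ℝ))).sub (h.const_div_atTop 2)
  rw [sub_zero] at this
  exact this.congr fun x => (tanh_eq_one_sub x).symm

end Real

-- `_root_.arcosh` unfolds to `Real.arcosh`, so Mathlib's lemmas about the latter apply.
theorem cosh_hypotenuse (p q : ℝ) : cosh (hypotenuse p q) = cosh p * cosh q :=
  Real.cosh_arcosh (one_le_mul_of_one_le_of_one_le (one_le_cosh p) (one_le_cosh q))

theorem hypotenuse_pos {p : ℝ} (hp : p ≠ 0) (q : ℝ) : 0 < hypotenuse p q :=
  Real.arcosh_pos (one_lt_mul_of_lt_of_le (one_lt_cosh.2 hp) (one_le_cosh q))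

theorem le_hypotenuse (p : ℝ) {q : ℝ} (hq : 0 ≤ q) : q ≤ hypotenuse p q := calc
  q = Real.arcosh (cosh q) := (Real.arcosh_cosh hq).symm
  _ ≤ Real.arcosh (cosh p * cosh q) :=
    (Real.arcosh_le_arcosh (cosh_pos q) (by positivity)).2
      (le_mul_of_one_le_left (cosh_pos q).le (one_le_cosh p))

theorem tendsto_hypotenuse_atTop (p : ℝ) : Tendsto (hypotenuse p) atTop atTop :=
  tendsto_atTop_mono' _ ((eventually_ge_atTop 0).mono fun _ => le_hypotenuse p) tendsto_id

theorem rightTriangleAngle_eq_arccos (p q : ℝ) :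
    rightTriangleAngle p q = arccos (tanh p / tanh (hypotenuse p q)) := by
  rw [rightTriangleAngle, cosh_hypotenuse, tanh_eq_sinh_div_cosh, tanh_eq_sinh_div_cosh,
    cosh_hypotenuse]
  congr 1
  -- In the degenerate cases both sides are `x / 0 = 0`.
  rcases eq_or_ne (sinh p) 0 with hp | hp
  · simp [sinh_eq_zero.1 hp]
  rcases eq_or_ne (sinh (hypotenuse p q)) 0 with hc | hc
  · simp [hc]
  have := (cosh_pos p).ne'
  field_simp
  linear_combination cosh_sq p

theorem rightTriangleAngle_le {p : ℝ} (hp : 0 < p) (q : ℝ) :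
    rightTriangleAngle p q ≤ arccos (tanh p) := by
  rw [rightTriangleAngle_eq_arccos]
  have hc := tanh_pos (hypotenuse_pos hp.ne' q)
  exact antitone_arccos (le_div_self (tanh_pos hp).le hc (tanh_lt_one _).le)

theorem tendsto_rightTriangleAngle_atTop (p : ℝ) :
    Tendsto (rightTriangleAngle p) atTop (𝓝 (arccos (tanh p))) := by
  have h : Tendsto (fun q => tanh p / tanh (hypotenuse p q)) atTop (𝓝 (tanh p / 1)) :=
    tendsto_const_nhds.div (tendsto_tanh_atTop.comp (tendsto_hypotenuse_atTop p)) one_ne_zero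
  rw [div_one] at h
  rw [funext (rightTriangleAngle_eq_arccos p)]
  exact (continuous_arccos.tendsto _).comp h

theorem isLUB_rightTriangleAngle {p : ℝ} (hp : 0 < p) :
    IsLUB (rightTriangleAngle p '' Set.Ioi 0) (arccos (tanh p)) := by
  refine isLUB_of_mem_closure ?_ (mem_closure_of_tendsto (tendsto_rightTriangleAngle_atTop p) ?_)
  · rintro _ ⟨q, -, rfl⟩
    exact rightTriangleAngle_le hp q
  · exact (eventually_gt_atTop 0).mono fun q hq => Set.mem_image_of_mem _ hq

/-- Angle of parallelism: for a point at distance `p > 0` from a line, the supremum of the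
angles `∠FGA` (over points `A ≠ F` on the line, i.e. over the leg length `q > 0` of the right
triangle `GFA`) equals `Π(p) = arccos (tanh p)`; in particular `Π(p) < π/2`, and
`Π(p) → π/2` as `p → 0⁺` while `Π(p) → 0` as `p → ∞`. -/
theorem angle_of_parallelism :
    (∀ p : ℝ, 0 < p →
      sSup ((fun q => rightTriangleAngle p q) '' Set.Ioi 0) = Real.arccos (Real.tanh p) ∧
      Real.arccos (Real.tanh p) < π / 2) ∧
    Tendsto (fun p => Real.arccos (Real.tanh p)) (𝓝[>] 0) (𝓝 (π / 2)) ∧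
    Tendsto (fun p => Real.arccos (Real.tanh p)) atTop (𝓝 0) := by
  refine ⟨fun p hp => ⟨?_, arccos_lt_pi_div_two.2 (tanh_pos hp)⟩, ?_, ?_⟩
  · exact (isLUB_rightTriangleAngle hp).csSup_eq ⟨_, 1, Set.mem_Ioi.2 one_pos, rfl⟩
  · have h := (continuous_arccos.comp continuous_tanh).tendsto 0
    rw [Function.comp_apply, tanh_zero, arccos_zero] at h
    exact h.mono_left nhdsWithin_le_nhds
  · simpa [Function.comp_def] using (continuous_arccos.tendsto 1).comp tendsto_tanh_atTop
end

section
/- Hyperbolic dual law of cosines: in a hyperbolic geodesic triangle with interior angles α, β, γ and with c the length of the side joining the vertices with angles α and β, one has cos γ = −cos α · cos β + sin α · sin β · cosh c. -/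
open scoped UpperHalfPlane
open Real

lemma cosBound (x y z : ℝ) (hx : 0 < x) (hy : 0 < y)
    (h1 : z ≤ x + y) (h2 : x ≤ z + y) (h3 : y ≤ z + x) :
    -1 ≤ (cosh x * cosh y - cosh z) / (sinh x * sinh y) ∧
      (cosh x * cosh y - cosh z) / (sinh x * sinh y) ≤ 1 := by
  have hz : 0 ≤ z := by linarith
  have hs : 0 < sinh x * sinh y := mul_pos (sinh_pos_iff.2 hx) (sinh_pos_iff.2 hy)
  have h4 : cosh z ≤ cosh x * cosh y + sinh x * sinh y := by
    rw [← Real.cosh_add]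
    refine Real.cosh_le_cosh.2 ?_
    rw [abs_of_nonneg hz, abs_of_nonneg (by linarith : (0:ℝ) ≤ x + y)]
    exact h1
  have h5 : cosh x * cosh y - sinh x * sinh y ≤ cosh z := by
    rw [← Real.cosh_sub]
    refine Real.cosh_le_cosh.2 ?_
    rw [abs_of_nonneg hz, abs_le]
    constructor <;> linarith
  constructor
  · rw [le_div_iff₀ hs]; linarith
  · rw [div_le_one hs]; linarith

lemma dual_aux (a b c : ℝ) (ha : 0 < a) (hb : 0 < b) (hc : 0 < c)
    (h1 : a ≤ b + c) (h2 : b ≤ a + c) (h3 : c ≤ a + b) :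
    (cosh b * cosh a - cosh c) / (sinh b * sinh a) =
      -((cosh c * cosh b - cosh a) / (sinh c * sinh b) *
          ((cosh c * cosh a - cosh b) / (sinh c * sinh a))) +
        Real.sqrt (1 - ((cosh c * cosh b - cosh a) / (sinh c * sinh b)) ^ 2) *
          Real.sqrt (1 - ((cosh c * cosh a - cosh b) / (sinh c * sinh a)) ^ 2) * cosh c := by
  have hsa := sinh_pos_iff.2 ha
  have hsb := sinh_pos_iff.2 hb
  have hsc := sinh_pos_iff.2 hc
  obtain ⟨hα1, hα2⟩ := cosBound c b a hc hb (by linarith) (by linarith) (by linarith)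
  obtain ⟨hβ1, hβ2⟩ := cosBound c a b hc ha (by linarith) (by linarith) (by linarith)
  set eα := (cosh c * cosh b - cosh a) / (sinh c * sinh b) with heα
  set eβ := (cosh c * cosh a - cosh b) / (sinh c * sinh a) with heβ
  have hP : 0 ≤ 1 - eα ^ 2 := by nlinarith
  have hQ : 0 ≤ 1 - eβ ^ 2 := by nlinarith
  set D := 1 + 2 * cosh a * cosh b * cosh c - cosh a ^ 2 - cosh b ^ 2 - cosh c ^ 2 with hD
  have hDeqP : 1 - eα ^ 2 = D / (sinh c * sinh b) ^ 2 := by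
    rw [heα, div_pow, hD]
    field_simp
    linear_combination (cosh b ^ 2 - 1) * Real.sinh_sq c + cosh c ^ 2 * Real.sinh_sq b +
      (sinh c ^ 2 - cosh c ^ 2) * Real.sinh_sq b
  have hDeqQ : 1 - eβ ^ 2 = D / (sinh c * sinh a) ^ 2 := by
    rw [heβ, div_pow, hD]
    field_simp
    linear_combination (cosh a ^ 2 - 1) * Real.sinh_sq c + cosh c ^ 2 * Real.sinh_sq a +
      (sinh c ^ 2 - cosh c ^ 2) * Real.sinh_sq a
  have hD0 : 0 ≤ D := by
    have h := hP
    rw [hDeqP] at h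
    have h2 : D = D / (sinh c * sinh b) ^ 2 * (sinh c * sinh b) ^ 2 :=
      (div_mul_cancel₀ _ (by positivity)).symm
    rw [h2]
    exact mul_nonneg h (sq_nonneg _)
  have hsq : Real.sqrt (1 - eα ^ 2) * Real.sqrt (1 - eβ ^ 2) =
      D / (sinh c ^ 2 * (sinh b * sinh a)) := by
    rw [hDeqP, hDeqQ, ← Real.sqrt_mul (div_nonneg hD0 (sq_nonneg _))]
    have h3 : D / (sinh c * sinh b) ^ 2 * (D / (sinh c * sinh a) ^ 2) =
        (D / (sinh c ^ 2 * (sinh b * sinh a))) ^ 2 := by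
      field_simp
    rw [h3, Real.sqrt_sq (div_nonneg hD0 (by positivity))]
  have key : (cosh b * cosh a - cosh c) * sinh c ^ 2 =
      -((cosh c * cosh b - cosh a) * (cosh c * cosh a - cosh b)) + D * cosh c := by
    rw [hD]
    linear_combination (cosh b * cosh a - cosh c) * Real.sinh_sq c
  have step : -(eα * eβ) + D / (sinh c ^ 2 * (sinh b * sinh a)) * cosh c =
      (-((cosh c * cosh b - cosh a) * (cosh c * cosh a - cosh b)) + D * cosh c) /
        (sinh c ^ 2 * (sinh b * sinh a)) := by
    rw [heα, heβ]
    field_simp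
  rw [hsq, step, ← key]
  rw [mul_comm (sinh c ^ 2) (sinh b * sinh a), mul_comm (cosh b * cosh a - cosh c) (sinh c ^ 2),
    mul_comm (sinh c ^ 2)]
  rw [mul_div_mul_right _ _ (by positivity : sinh c ^ 2 ≠ 0)]

/-- The interior angle at vertex `p` of the hyperbolic triangle with other vertices `x`, `y`. -/
noncomputable def hAngle (x p y : ℍ) : ℝ :=
  Real.arccos ((Real.cosh (dist p x) * Real.cosh (dist p y) - Real.cosh (dist x y)) /
    (Real.sinh (dist p x) * Real.sinh (dist p y)))

/-- The hyperbolic geodesic segment between `x` and `y` (as a metric segment). -/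
def hSeg (x y : ℍ) : Set ℍ := {p | dist x p + dist p y = dist x y}

/-- Hyperbolic dual law of cosines: in a hyperbolic geodesic triangle with interior angles
`α, β, γ` and `c` the length of the side joining the vertices with angles `α` and `β`, one has
`cos γ = −cos α · cos β + sin α · sin β · cosh c`. -/
theorem hyperbolic_dual_law_of_cosines (A B C : ℍ)
    (hAB : A ≠ B) (hBC : B ≠ C) (hAC : A ≠ C)
    (hA : A ∉ hSeg B C) (hB : B ∉ hSeg A C) (hC : C ∉ hSeg A B) :
    Real.cos (hAngle A C B) =
      -(Real.cos (hAngle B A C) * Real.cos (hAngle A B C)) +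
        Real.sin (hAngle B A C) * Real.sin (hAngle A B C) * Real.cosh (dist A B) := by
  have hc : 0 < dist A B := dist_pos.2 hAB
  have ha : 0 < dist B C := dist_pos.2 hBC
  have hb : 0 < dist A C := dist_pos.2 hAC
  have t1 : dist B C ≤ dist A C + dist A B := by
    have := dist_triangle B A C
    rw [dist_comm B A] at this
    linarith [this]
  have t2 : dist A C ≤ dist B C + dist A B := by
    have := dist_triangle A B C
    linarith [this]
  have t3 : dist A B ≤ dist B C + dist A C := by
    have := dist_triangle A C B
    rw [dist_comm C B] at this
    linarith [this]
  rw [hAngle, hAngle, hAngle, dist_comm C A, dist_comm C B, dist_comm B A]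
  obtain ⟨hα1, hα2⟩ := cosBound (dist A C) (dist B C) (dist A B) hb ha
    (by linarith) (by linarith) (by linarith)
  obtain ⟨hβ1, hβ2⟩ := cosBound (dist A B) (dist A C) (dist B C) hc hb
    (by linarith) (by linarith) (by linarith)
  obtain ⟨hγ1, hγ2⟩ := cosBound (dist A B) (dist B C) (dist A C) hc ha
    (by linarith) (by linarith) (by linarith)
  rw [Real.cos_arccos hα1 hα2, Real.cos_arccos hβ1 hβ2, Real.cos_arccos hγ1 hγ2,
    Real.sin_arccos, Real.sin_arccos]
  exact dual_aux (dist B C) (dist A C) (dist A B) ha hb hc (by linarith) (by linarith) (by linarith)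
end

section
/- Lambert quadrilateral in hyperbolic geometry: in a hyperbolic quadrilateral ABCD with right angles at A, B, and C, the fourth angle at D is strictly acute, and moreover each side adjacent to the acute angle is strictly longer than the side opposite to it: d(C,D) > d(A,B) and d(A,D) > d(B,C). -/
open scoped UpperHalfPlane
open Real

lemma cosh_dist_coords (z w : ℍ) : Real.cosh (dist z w) =
    ((z.re - w.re) ^ 2 + z.im ^ 2 + w.im ^ 2) / (2 * z.im * w.im) := by
  rw [UpperHalfPlane.cosh_dist, Complex.dist_eq_re_im, Real.sq_sqrt (by positivity)]
  have h1 : z.im > 0 := z.im_pos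
  have h2 : w.im > 0 := w.im_pos
  rw [UpperHalfPlane.coe_re, UpperHalfPlane.coe_re, UpperHalfPlane.coe_im,
    UpperHalfPlane.coe_im]
  field_simp
  ring

set_option maxHeartbeats 2000000 in
/-- Four points of the hyperbolic plane lift to four vectors on the hyperboloid in ℝ^{2,1},
so the Gram matrix of their pairwise `cosh` distances is singular. -/
lemma hyperboloid_det (z1 z2 z3 z4 : ℍ) :
    1 - Real.cosh (dist z2 z4) ^ 2 - Real.cosh (dist z1 z3) ^ 2
      + Real.cosh (dist z1 z3) ^ 2 * Real.cosh (dist z2 z4) ^ 2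
      - Real.cosh (dist z1 z4) ^ 2
      + 2 * Real.cosh (dist z3 z4) * Real.cosh (dist z1 z4) * Real.cosh (dist z1 z3)
      - Real.cosh (dist z3 z4) ^ 2
      - 2 * Real.cosh (dist z2 z3) * Real.cosh (dist z1 z4) * Real.cosh (dist z1 z3)
          * Real.cosh (dist z2 z4)
      + 2 * Real.cosh (dist z2 z3) * Real.cosh (dist z3 z4) * Real.cosh (dist z2 z4)
      - Real.cosh (dist z2 z3) ^ 2
      + Real.cosh (dist z2 z3) ^ 2 * Real.cosh (dist z1 z4) ^ 2
      + 2 * Real.cosh (dist z1 z2) * Real.cosh (dist z1 z4) * Real.cosh (dist z2 z4)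
      - 2 * Real.cosh (dist z1 z2) * Real.cosh (dist z3 z4) * Real.cosh (dist z1 z3)
          * Real.cosh (dist z2 z4)
      + 2 * Real.cosh (dist z1 z2) * Real.cosh (dist z2 z3) * Real.cosh (dist z1 z3)
      - 2 * Real.cosh (dist z1 z2) * Real.cosh (dist z2 z3) * Real.cosh (dist z3 z4)
          * Real.cosh (dist z1 z4)
      - Real.cosh (dist z1 z2) ^ 2
      + Real.cosh (dist z1 z2) ^ 2 * Real.cosh (dist z3 z4) ^ 2 = 0 := by
  rw [cosh_dist_coords z1 z2, cosh_dist_coords z2 z3, cosh_dist_coords z3 z4,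
    cosh_dist_coords z1 z4, cosh_dist_coords z1 z3, cosh_dist_coords z2 z4]
  have e1 : z1.im ≠ 0 := z1.im_pos.ne'
  have e2 : z2.im ≠ 0 := z2.im_pos.ne'
  have e3 : z3.im ≠ 0 := z3.im_pos.ne'
  have e4 : z4.im ≠ 0 := z4.im_pos.ne'
  field_simp
  ring

set_option maxHeartbeats 1600000 in
/-- Lambert quadrilateral: in a convex hyperbolic quadrilateral `ABCD` (its diagonals meet)
with right interior angles at `A`, `B`, `C`, the fourth angle at `D` is strictly acute, and each
side adjacent to the acute angle is strictly longer than the side opposite to it. -/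
theorem lambert_quadrilateral (A B C D : ℍ)
    (hAB : A ≠ B) (hBC : B ≠ C) (hCD : C ≠ D) (hDA : D ≠ A) (hACd : A ≠ C) (hBDd : B ≠ D)
    (hconv : ∃ P, P ∈ hSeg A C ∧ P ∈ hSeg B D)
    (hA : hAngle D A B = π / 2) (hB : hAngle A B C = π / 2) (hC : hAngle B C D = π / 2) :
    hAngle C D A < π / 2 ∧ dist C D > dist A B ∧ dist A D > dist B C := by
  have sinh_pos' : ∀ x y : ℍ, x ≠ y → 0 < Real.sinh (dist x y) := fun x y h =>
    by rw [Real.sinh_pos_iff]; exact dist_pos.2 h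
  -- extract the hyperbolic Pythagoras relations from the right angles
  have extract : ∀ x p y : ℍ, p ≠ x → p ≠ y → hAngle x p y = π / 2 →
      Real.cosh (dist p x) * Real.cosh (dist p y) = Real.cosh (dist x y) := by
    intro x p y hpx hpy h
    rw [hAngle, Real.arccos_eq_pi_div_two, div_eq_zero_iff] at h
    rcases h with h | h
    · linarith [h]
    · exact absurd h (mul_pos (sinh_pos' p x hpx) (sinh_pos' p y hpy)).ne'
  have n1 := extract D A B (fun h => hDA h.symm) hAB hA
  have n2 := extract A B C (fun h => hAB h.symm) hBC hB
  have n3 := extract B C D (fun h => hBC h.symm) hCD hC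
  rw [dist_comm D B] at n1
  rw [dist_comm B A] at n2
  rw [dist_comm C B] at n3
  have hdet := hyperboloid_det A B C D
  set a := Real.cosh (dist A B) with ha
  set b := Real.cosh (dist B C) with hb
  set c := Real.cosh (dist C D) with hc
  set d := Real.cosh (dist A D) with hd
  set e := Real.cosh (dist A C) with he
  set f := Real.cosh (dist B D) with hf
  -- n1 : d * a = f, n2 : a * b = e, n3 : b * c = f
  have ha1 : 1 < a := Real.one_lt_cosh.2 (dist_pos.2 hAB).ne'
  have hb1 : 1 < b := Real.one_lt_cosh.2 (dist_pos.2 hBC).ne'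
  have hc1 : 1 < c := Real.one_lt_cosh.2 (dist_pos.2 hCD).ne'
  have hd1 : 1 < d := Real.one_lt_cosh.2 (dist_pos.2 (fun h => hDA h.symm)).ne'
  -- substitute e and f in the determinant identity
  rw [← n2, ← n3] at hdet
  have hdd : d * a = b * c := by rw [n1, ← n3]
  -- the key algebraic relation
  have h5 : (b ^ 2 - 1) * (a ^ 2 - 1) * (c ^ 2 * (a ^ 2 + b ^ 2 - a ^ 2 * b ^ 2) - a ^ 2) = 0 := by
    linear_combination (b ^ 2 - 1) * (a * d + b * c - 2 * a ^ 2 * b * c) * hdd -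
      a ^ 2 * hdet
  have h6 : c ^ 2 * (a ^ 2 + b ^ 2 - a ^ 2 * b ^ 2) = a ^ 2 := by
    have hne : (b ^ 2 - 1) * (a ^ 2 - 1) ≠ 0 :=
      mul_ne_zero (by nlinarith) (by nlinarith)
    have := (mul_eq_zero.1 h5).resolve_left hne
    linarith [this]
  have hprod : 0 < (a ^ 2 - 1) * (b ^ 2 - 1) :=
    mul_pos (by nlinarith) (by nlinarith)
  have hK : a ^ 2 + b ^ 2 - a ^ 2 * b ^ 2 < 1 := by nlinarith [hprod]
  have hsq : a ^ 2 < c ^ 2 := by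
    nlinarith [mul_pos (show (0:ℝ) < 1 - (a ^ 2 + b ^ 2 - a ^ 2 * b ^ 2) by linarith)
      (show (0:ℝ) < c ^ 2 by positivity), h6]
  have hca : a < c := by nlinarith [hsq]
  refine ⟨?_, ?_, ?_⟩
  · -- the angle at D is acute
    rw [hAngle, dist_comm D C, dist_comm D A, dist_comm C A, ← hc, ← hd, ← he]
    rw [Real.arccos_lt_pi_div_two]
    apply div_pos
    · rw [← n2]
      nlinarith [hdd, mul_pos (show (0:ℝ) < b by linarith)
        (show (0:ℝ) < c ^ 2 - a ^ 2 by nlinarith), ha1]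
    · exact mul_pos (sinh_pos' C D hCD) (sinh_pos' A D (fun h => hDA h.symm))
  · -- dist C D > dist A B
    have : |dist A B| < |dist C D| := by
      rw [abs_of_nonneg dist_nonneg, abs_of_nonneg dist_nonneg]
      by_contra h
      push_neg at h
      have : c ≤ a := by rw [ha, hc]; exact Real.cosh_le_cosh.2 (by
        rwa [abs_of_nonneg dist_nonneg, abs_of_nonneg dist_nonneg])
      linarith
    rwa [abs_of_nonneg dist_nonneg, abs_of_nonneg dist_nonneg] at this
  · -- dist A D > dist B C
    have hdb : b < d := by
      nlinarith [hdd, mul_pos (show (0:ℝ) < b by linarith) (show (0:ℝ) < c - a by linarith), ha1]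
    have : |dist B C| < |dist A D| := by
      by_contra h
      push_neg at h
      have : d ≤ b := by rw [hb, hd]; exact Real.cosh_le_cosh.2 h
      linarith
    rwa [abs_of_nonneg dist_nonneg, abs_of_nonneg dist_nonneg] at this
end

section
/- Median ratio characterizes the geometry (hyperbolic case): let ABC be an equilateral hyperbolic triangle, F the midpoint of BC, and D the circumcenter (the common intersection point of the perpendicular bisectors of the sides, which exists for an equilateral hyperbolic triangle). Then d(D,F) < (1/3) · d(A,F). -/
open scoped UpperHalfPlane
open Real

noncomputable def hv0 (z : ℍ) : ℝ := (z.re ^ 2 + z.im ^ 2 + 1) / (2 * z.im)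
noncomputable def hv1 (z : ℍ) : ℝ := z.re / z.im
noncomputable def hv2 (z : ℍ) : ℝ := (z.re ^ 2 + z.im ^ 2 - 1) / (2 * z.im)

lemma hQ_eq (z w : ℍ) :
    hv0 z * hv0 w - hv1 z * hv1 w - hv2 z * hv2 w = cosh (dist z w) := by
  rw [UpperHalfPlane.cosh_dist, Complex.dist_eq, ← Complex.normSq_eq_norm_sq, Complex.normSq_apply]
  simp only [Complex.sub_re, Complex.sub_im, UpperHalfPlane.coe_re, UpperHalfPlane.coe_im]
  have hz := z.im_pos
  have hw := w.im_pos
  unfold hv0 hv1 hv2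
  field_simp
  ring

lemma hv0_pos (z : ℍ) : 0 < hv0 z := by
  have hz := z.im_pos
  unfold hv0
  positivity

lemma hQ_self (z : ℍ) : hv0 z * hv0 z - hv1 z * hv1 z - hv2 z * hv2 z = 1 := by
  rw [hQ_eq, dist_self, Real.cosh_zero]

set_option maxHeartbeats 2000000 in
/-- Hyperbolic Stewart identity. -/
lemma hyperbolic_stewart (B C F P : ℍ) (h : dist B F + dist F C = dist B C) :
    cosh (dist P F) * sinh (dist B C)
      = cosh (dist P B) * sinh (dist F C) + cosh (dist P C) * sinh (dist B F) := by
  have hpn : 0 ≤ dist B F := dist_nonneg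
  have hqn : 0 ≤ dist F C := dist_nonneg
  rcases eq_or_lt_of_le (dist_nonneg : (0:ℝ) ≤ dist B C) with hBC | hBC
  · have hp0 : dist B F = 0 := by linarith
    have hq0 : dist F C = 0 := by linarith
    rw [← hBC, hp0, hq0]
    simp
  -- trig identities
  have k1 : cosh (dist B F) * sinh (dist B C) - sinh (dist B F) * cosh (dist B C)
      = sinh (dist F C) := by
    have h' := Real.sinh_sub (dist B C) (dist B F)
    rw [show dist B C - dist B F = dist F C by linarith] at h'
    linear_combination -h'
  have k2 : cosh (dist F C) * sinh (dist B C) - sinh (dist F C) * cosh (dist B C)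
      = sinh (dist B F) := by
    have h' := Real.sinh_sub (dist B C) (dist F C)
    rw [show dist B C - dist F C = dist B F by linarith] at h'
    linear_combination -h'
  have k3 : sinh (dist B C) = sinh (dist B F) * cosh (dist F C)
      + cosh (dist B F) * sinh (dist F C) := by
    rw [← h]; exact Real.sinh_add _ _
  -- Minkowski products
  have hQFB : hv0 F * hv0 B - hv1 F * hv1 B - hv2 F * hv2 B = cosh (dist B F) := by
    rw [hQ_eq, dist_comm]
  have hQFC : hv0 F * hv0 C - hv1 F * hv1 C - hv2 F * hv2 C = cosh (dist F C) := hQ_eq F C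
  have hQBC : hv0 B * hv0 C - hv1 B * hv1 C - hv2 B * hv2 C = cosh (dist B C) := hQ_eq B C
  have hQFF := hQ_self F
  have hQBB := hQ_self B
  have hQCC := hQ_self C
  obtain ⟨u0, hu0⟩ : ∃ u0, u0 = hv0 F * sinh (dist B C)
      - sinh (dist F C) * hv0 B - sinh (dist B F) * hv0 C := ⟨_, rfl⟩
  obtain ⟨u1, hu1⟩ : ∃ u1, u1 = hv1 F * sinh (dist B C)
      - sinh (dist F C) * hv1 B - sinh (dist B F) * hv1 C := ⟨_, rfl⟩
  obtain ⟨u2, hu2⟩ : ∃ u2, u2 = hv2 F * sinh (dist B C)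
      - sinh (dist F C) * hv2 B - sinh (dist B F) * hv2 C := ⟨_, rfl⟩
  have huB : u0 * hv0 B - u1 * hv1 B - u2 * hv2 B = 0 := by
    rw [hu0, hu1, hu2]
    linear_combination sinh (dist B C) * hQFB - sinh (dist F C) * hQBB
      - sinh (dist B F) * hQBC + k1
  have huC : u0 * hv0 C - u1 * hv1 C - u2 * hv2 C = 0 := by
    rw [hu0, hu1, hu2]
    linear_combination sinh (dist B C) * hQFC - sinh (dist B F) * hQCC
      - sinh (dist F C) * hQBC + k2
  have huF : u0 * hv0 F - u1 * hv1 F - u2 * hv2 F = 0 := by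
    rw [hu0, hu1, hu2]
    linear_combination sinh (dist B C) * hQFF - sinh (dist F C) * hQFB
      - sinh (dist B F) * hQFC + k3
  have huu : u0 ^ 2 - u1 ^ 2 - u2 ^ 2 = 0 := by
    calc u0 ^ 2 - u1 ^ 2 - u2 ^ 2
        = sinh (dist B C) * (u0 * hv0 F - u1 * hv1 F - u2 * hv2 F)
          - sinh (dist F C) * (u0 * hv0 B - u1 * hv1 B - u2 * hv2 B)
          - sinh (dist B F) * (u0 * hv0 C - u1 * hv1 C - u2 * hv2 C) := by
          rw [hu0, hu1, hu2]; ring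
      _ = 0 := by rw [huB, huC, huF]; ring
  have h0sq : u0 ^ 2 + (u1 * hv2 B - u2 * hv1 B) ^ 2 = 0 := by
    linear_combination (u0 * hv0 B + u1 * hv1 B + u2 * hv2 B) * huB
      - (hv1 B ^ 2 + hv2 B ^ 2) * huu - u0 ^ 2 * hQBB
  have h0e : u0 ^ 2 = 0 := by
    have := sq_nonneg u0
    have := sq_nonneg (u1 * hv2 B - u2 * hv1 B)
    linarith
  have h0 : u0 = 0 := (pow_eq_zero_iff two_ne_zero).mp h0e
  have h1e : u1 ^ 2 = 0 := by
    have := sq_nonneg u1; have := sq_nonneg u2; linarith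
  have h2e : u2 ^ 2 = 0 := by
    have := sq_nonneg u1; have := sq_nonneg u2; linarith
  have h1 : u1 = 0 := (pow_eq_zero_iff two_ne_zero).mp h1e
  have h2 : u2 = 0 := (pow_eq_zero_iff two_ne_zero).mp h2e
  rw [hu0] at h0; rw [hu1] at h1; rw [hu2] at h2
  have hPF : hv0 P * hv0 F - hv1 P * hv1 F - hv2 P * hv2 F = cosh (dist P F) := hQ_eq P F
  have hPB : hv0 P * hv0 B - hv1 P * hv1 B - hv2 P * hv2 B = cosh (dist P B) := hQ_eq P B
  have hPC : hv0 P * hv0 C - hv1 P * hv1 C - hv2 P * hv2 C = cosh (dist P C) := hQ_eq P C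
  linear_combination -(sinh (dist B C) * hPF) + sinh (dist F C) * hPB + sinh (dist B F) * hPC
    + hv0 P * h0 - hv1 P * h1 - hv2 P * h2

set_option maxHeartbeats 1000000 in
/-- In an equilateral hyperbolic triangle `ABC`, with `F` the midpoint of `BC` and `D` the
circumcenter (the point on `AF` equidistant from the three vertices), one has
`d(D,F) < (1/3)·d(A,F)`. -/
theorem hyperbolic_median_ratio (A B C F D : ℍ) (s : ℝ) (hs : 0 < s)
    (hABs : dist A B = s) (hBCs : dist B C = s) (hCAs : dist C A = s)
    (hF : F ∈ hSeg B C) (hFmid : dist B F = dist F C)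
    (hD : D ∈ hSeg A F)
    (hDA : dist D A = dist D B) (hDB : dist D B = dist D C) :
    dist D F < (1 / 3) * dist A F := by
  have hF' : dist B F + dist F C = dist B C := hF
  have hD' : dist A D + dist D F = dist A F := hD
  have hBF : dist B F = s / 2 := by rw [hBCs] at hF'; linarith [hFmid]
  have hFC : dist F C = s / 2 := by linarith [hFmid]
  have hsp : 0 < sinh (s / 2) := Real.sinh_pos_iff.mpr (by linarith)
  have hc : 1 < cosh (s / 2) := Real.one_lt_cosh.mpr (by positivity)
  have hsinh2 : sinh s = 2 * sinh (s / 2) * cosh (s / 2) := by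
    have := Real.sinh_two_mul (s / 2); rw [show 2 * (s / 2) = s by ring] at this; exact this
  have hcosh2 : cosh s = 2 * cosh (s / 2) ^ 2 - 1 := by
    have := Real.cosh_two_mul (s / 2)
    rw [show 2 * (s / 2) = s by ring, Real.sinh_sq] at this; linarith
  -- Stewart for D
  have st1 := hyperbolic_stewart B C F D hF'
  rw [hBCs, hBF, hFC, ← hDB] at st1
  have hcr : cosh (dist D B) = cosh (s / 2) * cosh (dist D F) := by
    apply mul_right_cancel₀ (ne_of_gt hsp)
    linear_combination (-(1:ℝ)/2) * st1 + (1/2) * cosh (dist D F) * hsinh2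
  -- Stewart for A
  have st2 := hyperbolic_stewart B C F A hF'
  have hAC : dist A C = s := by rw [dist_comm]; exact hCAs
  rw [hBCs, hBF, hFC, hABs, hAC] at st2
  have hcm : cosh (dist A F) * cosh (s / 2) = 2 * cosh (s / 2) ^ 2 - 1 := by
    apply mul_right_cancel₀ (ne_of_gt hsp)
    linear_combination (1/2) * st2 - (1/2) * cosh (dist A F) * hsinh2 + sinh (s/2) * hcosh2
  -- the median decomposition
  have hADr : dist A D = dist D B := by rw [dist_comm]; exact hDA
  have hm : dist A F = dist D B + dist D F := by rw [← hD', hADr]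
  have hexp : cosh (dist A F)
      = cosh (dist D B) * cosh (dist D F) + sinh (dist D B) * sinh (dist D F) := by
    rw [hm, Real.cosh_add]
  have hs1 : sinh (dist D B) ^ 2 = cosh (dist D B) ^ 2 - 1 := Real.sinh_sq _
  have hs2 : sinh (dist D F) ^ 2 = cosh (dist D F) ^ 2 - 1 := Real.sinh_sq _
  have key : sinh (dist D B) * sinh (dist D F)
      = cosh (dist A F) - cosh (s / 2) * cosh (dist D F) ^ 2 := by
    linear_combination -hexp - cosh (dist D F) * hcr
  have keysq : (cosh (dist A F) - cosh (s / 2) * cosh (dist D F) ^ 2) ^ 2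
      = (cosh (s / 2) ^ 2 * cosh (dist D F) ^ 2 - 1) * (cosh (dist D F) ^ 2 - 1) := by
    have h2 : (sinh (dist D B) * sinh (dist D F)) ^ 2
        = (cosh (s / 2) ^ 2 * cosh (dist D F) ^ 2 - 1) * (cosh (dist D F) ^ 2 - 1) := by
      have hcr2 : cosh (dist D B) ^ 2 = cosh (s / 2) ^ 2 * cosh (dist D F) ^ 2 := by
        rw [hcr]; ring
      calc (sinh (dist D B) * sinh (dist D F)) ^ 2
          = (cosh (dist D B) ^ 2 - 1) * (cosh (dist D F) ^ 2 - 1) := by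
            rw [mul_pow, hs1, hs2]
        _ = (cosh (s / 2) ^ 2 * cosh (dist D F) ^ 2 - 1) * (cosh (dist D F) ^ 2 - 1) := by
            rw [hcr2]
    rw [← h2, key]
  -- derive the value of cosh(dist D F)^2
  have e1 : (cosh (s / 2) ^ 2 - 1)
      * (3 * cosh (s / 2) ^ 2 * cosh (dist D F) ^ 2 - (4 * cosh (s / 2) ^ 2 - 1)) = 0 := by
    linear_combination (-(cosh (s / 2) ^ 2)) * keysq
      + (cosh (s / 2) * cosh (dist A F) + 2 * cosh (s / 2) ^ 2 - 1
        - 2 * cosh (s / 2) ^ 2 * cosh (dist D F) ^ 2) * hcm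
  have hc21 : 1 < cosh (s / 2) ^ 2 := by nlinarith [hc]
  have hcne : cosh (s / 2) ^ 2 - 1 ≠ 0 := by
    have : 0 < cosh (s / 2) ^ 2 - 1 := by linarith
    exact ne_of_gt this
  have hx2 : 3 * cosh (s / 2) ^ 2 * cosh (dist D F) ^ 2 = 4 * cosh (s / 2) ^ 2 - 1 := by
    rcases mul_eq_zero.mp e1 with h' | h'
    · exact absurd h' hcne
    · linarith
  -- final inequality
  have hx1 : 1 ≤ cosh (dist D F) := Real.one_le_cosh _
  have hA : 0 < cosh (s / 2) ^ 2 - 1 := by linarith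
  have hB : 0 < 3 * cosh (s / 2) ^ 2 - 1 := by linarith
  have h4 : 0 < 4 * (cosh (s / 2) ^ 2 - 1) ^ 2 * (3 * cosh (s / 2) ^ 2 - 1) :=
    mul_pos (mul_pos four_pos (pow_pos hA 2)) hB
  have hid : (3 * cosh (s / 2) ^ 3 * cosh (dist D F) - (5 * cosh (s / 2) ^ 2 - 2))
      * (3 * cosh (s / 2) ^ 3 * cosh (dist D F) + (5 * cosh (s / 2) ^ 2 - 2))
      = 4 * (cosh (s / 2) ^ 2 - 1) ^ 2 * (3 * cosh (s / 2) ^ 2 - 1) := by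
    linear_combination 3 * cosh (s / 2) ^ 4 * hx2
  have hpos : 0 < (3 * cosh (s / 2) ^ 3 * cosh (dist D F) - (5 * cosh (s / 2) ^ 2 - 2))
      * (3 * cosh (s / 2) ^ 3 * cosh (dist D F) + (5 * cosh (s / 2) ^ 2 - 2)) := by
    rw [hid]; exact h4
  have hcpos : 0 < cosh (s / 2) := by linarith
  have hsum : 0 < 3 * cosh (s / 2) ^ 3 * cosh (dist D F) + (5 * cosh (s / 2) ^ 2 - 2) := by
    have h1 : 0 < 3 * cosh (s / 2) ^ 3 * cosh (dist D F) := by positivity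
    linarith
  have hgt : 5 * cosh (s / 2) ^ 2 - 2 < 3 * cosh (s / 2) ^ 3 * cosh (dist D F) := by
    rcases mul_pos_iff.mp hpos with ⟨h', _⟩ | ⟨_, h'⟩
    · linarith
    · linarith
  have hc2 : (0:ℝ) < 3 * cosh (s / 2) ^ 2 := by positivity
  have hkey2 : 2 * cosh (dist D F) ^ 2 - 1 < cosh (s / 2) * cosh (dist D F) := by
    have hmul : 3 * cosh (s / 2) ^ 2 * (2 * cosh (dist D F) ^ 2 - 1)
        < 3 * cosh (s / 2) ^ 2 * (cosh (s / 2) * cosh (dist D F)) := by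
      calc 3 * cosh (s / 2) ^ 2 * (2 * cosh (dist D F) ^ 2 - 1)
          = 2 * (3 * cosh (s / 2) ^ 2 * cosh (dist D F) ^ 2) - 3 * cosh (s / 2) ^ 2 := by ring
        _ = 2 * (4 * cosh (s / 2) ^ 2 - 1) - 3 * cosh (s / 2) ^ 2 := by rw [hx2]
        _ = 5 * cosh (s / 2) ^ 2 - 2 := by ring
        _ < 3 * cosh (s / 2) ^ 3 * cosh (dist D F) := hgt
        _ = 3 * cosh (s / 2) ^ 2 * (cosh (s / 2) * cosh (dist D F)) := by ring
    exact (mul_lt_mul_iff_right₀ hc2).mp hmul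
  have h2f : cosh (2 * dist D F) < cosh (dist D B) := by
    have hdf : cosh (2 * dist D F) = 2 * cosh (dist D F) ^ 2 - 1 := by
      rw [Real.cosh_two_mul, Real.sinh_sq]; ring
    rw [hdf, hcr]; exact hkey2
  have hlt : 2 * dist D F < dist D B := by
    have habs := Real.cosh_lt_cosh.mp h2f
    rwa [abs_of_nonneg (by positivity), abs_of_nonneg dist_nonneg] at habs
  rw [hm]
  linarith [hlt]
end
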